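/- Let m ≥ 10, n > 2 log m, and suppose q : ℝ^m → ℝ is defined by q(x_1,...,x_m) = E[p(X)] where p : {0,1}^{m×n} → [0,1] satisfies p(X) ≤ 1/3 whenever AND_m∘OR_n(X) = 0 and p(X) ≥ 2/3 whenever AND_m∘OR_n(X) = 1, and X has independent entries with X_{i,j} Bernoulli(x_i/n). Then: (1) if some x_i ≤ 1/6 (with all x_j ∈ [0,n]) then q(x) ≤ 1/2, and (2) if all x_i ≥ 2 log m then q(x) ≥ 3/5. -/

import Mathlib

lemma sum_prod_pi {ι : Type*} [Fintype ι] [DecidableEq ι] {α : Type*} [Fintype α] [DecidableEq α]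
    (h : ι → α → ℝ) :
    ∑ X : ι → α, ∏ i, h i (X i) = ∏ i, ∑ y : α, h i y := by
  rw [Finset.prod_univ_sum, Fintype.piFinset_univ]

lemma row_sum (n : ℕ) (a : ℝ) : ∑ y : Fin n → Bool, ∏ j, (if y j then a else 1 - a) = 1 := by
  rw [sum_prod_pi (fun (_ : Fin n) (b : Bool) => if b then a else 1 - a)]
  simp

lemma total_sum (m n : ℕ) (r : Fin m → ℝ) :
    ∑ X : Fin m → Fin n → Bool, ∏ i, ∏ j, (if X i j then r i else 1 - r i) = 1 := by
  rw [sum_prod_pi (fun (i : Fin m) (y : Fin n → Bool) => ∏ j, (if y j then r i else 1 - r i))]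
  simp [row_sum]

lemma event_sum (m n : ℕ) (r : Fin m → ℝ) (i0 : Fin m) :
    ∑ X ∈ Finset.univ.filter (fun X : Fin m → Fin n → Bool => ∀ j, X i0 j = false),
      ∏ i, ∏ j, (if X i j then r i else 1 - r i) = (1 - r i0) ^ n := by
  rw [Finset.sum_filter]
  have key : ∀ X : Fin m → Fin n → Bool,
      (if (∀ j, X i0 j = false) then ∏ i, ∏ j, (if X i j then r i else 1 - r i) else 0)
        = ∏ i, ((if i = i0 then (if (∀ j, X i j = false) then (1:ℝ) else 0) else 1)
            * ∏ j, (if X i j then r i else 1 - r i)) := by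
    intro X
    rw [Finset.prod_mul_distrib, Finset.prod_ite_eq' Finset.univ i0
      (fun i => if (∀ j, X i j = false) then (1:ℝ) else 0)]
    simp only [Finset.mem_univ, if_true]
    by_cases h : ∀ j, X i0 j = false <;> simp [h]
  simp_rw [key]
  rw [sum_prod_pi (fun (i : Fin m) (y : Fin n → Bool) =>
    (if i = i0 then (if (∀ j, y j = false) then (1:ℝ) else 0) else 1)
      * ∏ j, (if y j then r i else 1 - r i))]
  have hfac : ∀ i : Fin m,
      (∑ y : Fin n → Bool, ((if i = i0 then (if (∀ j, y j = false) then (1:ℝ) else 0) else 1)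
        * ∏ j, (if y j then r i else 1 - r i)))
        = if i = i0 then (1 - r i0) ^ n else 1 := by
    intro i
    by_cases h : i = i0
    · subst h
      have he : ∀ y : Fin n → Bool, (∀ j, y j = false) ↔ y = fun _ => false := by
        intro y; constructor
        · intro h; funext j; exact h j
        · intro h j; rw [h]
      simp_rw [he]
      simp only [if_true, ite_mul, one_mul, zero_mul]
      rw [Finset.sum_ite_eq' Finset.univ (fun _ => false)
        (fun y => ∏ j, (if y j then r i else 1 - r i))]
      simp
    · simp only [if_neg h, one_mul]
      exact row_sum n (r i)
  simp_rw [hfac]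
  simp

theorem robust_symmetrization_bounds (m n : ℕ) (hm : 10 ≤ m) (hn : 2 * Real.log m < n)
    (p : (Fin m → Fin n → Bool) → ℝ)
    (hp01 : ∀ X, 0 ≤ p X ∧ p X ≤ 1)
    (hp0 : ∀ X : Fin m → Fin n → Bool, ¬ (∀ i, ∃ j, X i j = true) → p X ≤ 1 / 3)
    (hp1 : ∀ X : Fin m → Fin n → Bool, (∀ i, ∃ j, X i j = true) → 2 / 3 ≤ p X)
    (q : (Fin m → ℝ) → ℝ)
    (hq : ∀ x : Fin m → ℝ,
      q x = ∑ X : Fin m → Fin n → Bool,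
        (∏ i : Fin m, ∏ j : Fin n, (if X i j then x i / n else 1 - x i / n)) * p X) :
    ∀ x : Fin m → ℝ, (∀ i, x i ∈ Set.Icc (0 : ℝ) n) →
      ((∃ i, x i ≤ 1 / 6) → q x ≤ 1 / 2) ∧
      ((∀ i, 2 * Real.log m ≤ x i) → 3 / 5 ≤ q x) := by
  intro x hx
  have hm' : (10:ℝ) ≤ (m:ℝ) := by exact_mod_cast hm
  have hmpos : (0:ℝ) < m := by linarith
  have hlogm : 0 < Real.log m := Real.log_pos (by linarith)
  have hnR : (0:ℝ) < n := lt_trans (by positivity) hn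
  have hn1 : (1:ℝ) ≤ n := by exact_mod_cast Nat.one_le_iff_ne_zero.mpr (by exact_mod_cast hnR.ne')
  -- weight function facts
  have hWnn : ∀ X : Fin m → Fin n → Bool,
      0 ≤ ∏ i, ∏ j, (if X i j then x i / n else 1 - x i / n) := by
    intro X
    apply Finset.prod_nonneg; intro i _
    apply Finset.prod_nonneg; intro j _
    have h1 := (hx i).1; have h2 := (hx i).2
    have : x i / n ≤ 1 := by rw [div_le_one hnR]; exact h2
    have : 0 ≤ x i / n := div_nonneg h1 hnR.le
    by_cases h : X i j <;> simp [h] <;> linarith [show x i / (n:ℝ) ≤ 1 by rw [div_le_one hnR]; exact (hx i).2]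
  have htot : ∑ X : Fin m → Fin n → Bool,
      ∏ i, ∏ j, (if X i j then x i / n else 1 - x i / n) = 1 :=
    total_sum m n (fun i => x i / n)
  have hev : ∀ i0 : Fin m, ∑ X ∈ Finset.univ.filter (fun X : Fin m → Fin n → Bool => ∀ j, X i0 j = false),
      ∏ i, ∏ j, (if X i j then x i / n else 1 - x i / n) = (1 - x i0 / n) ^ n :=
    fun i0 => event_sum m n (fun i => x i / n) i0
  constructor
  · -- case 1
    rintro ⟨i0, hi0⟩
    have hS := hev i0
    set W : (Fin m → Fin n → Bool) → ℝ :=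
      fun X => ∏ i, ∏ j, (if X i j then x i / n else 1 - x i / n) with hWdef
    have hsplitW := Finset.sum_filter_add_sum_filter_not Finset.univ
      (fun X : Fin m → Fin n → Bool => ∀ j, X i0 j = false) W
    have hsplitQ := Finset.sum_filter_add_sum_filter_not Finset.univ
      (fun X : Fin m → Fin n → Bool => ∀ j, X i0 j = false) (fun X => W X * p X)
    rw [htot] at hsplitW
    -- bound the two pieces
    have hb1 : ∑ X ∈ Finset.univ.filter (fun X : Fin m → Fin n → Bool => ∀ j, X i0 j = false),
        W X * p X ≤ (1/3) * (1 - x i0 / n) ^ n := by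
      rw [← hS, Finset.mul_sum]
      apply Finset.sum_le_sum
      intro X hX
      rw [Finset.mem_filter] at hX
      have hpX : p X ≤ 1/3 := by
        apply hp0
        intro hcon
        obtain ⟨j, hj⟩ := hcon i0
        rw [hX.2 j] at hj; exact Bool.false_ne_true hj
      rw [mul_comm ((1:ℝ)/3) (W X)]
      exact mul_le_mul_of_nonneg_left hpX (hWnn X)
    have hb2 : ∑ X ∈ Finset.univ.filter (fun X : Fin m → Fin n → Bool => ¬ ∀ j, X i0 j = false),
        W X * p X ≤ 1 - (1 - x i0 / n) ^ n := by
      have : ∑ X ∈ Finset.univ.filter (fun X : Fin m → Fin n → Bool => ¬ ∀ j, X i0 j = false),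
          W X * p X ≤ ∑ X ∈ Finset.univ.filter (fun X : Fin m → Fin n → Bool => ¬ ∀ j, X i0 j = false),
          W X := by
        apply Finset.sum_le_sum
        intro X _
        calc W X * p X ≤ W X * 1 := mul_le_mul_of_nonneg_left (hp01 X).2 (hWnn X)
          _ = W X := mul_one _
      rw [hS] at hsplitW
      linarith
    -- Bernoulli bound
    have hBer : (5:ℝ)/6 ≤ (1 - x i0 / n) ^ n := by
      have h0 := (hx i0).1
      have ha : -2 ≤ -(x i0 / n) := by
        have : x i0 / n ≤ 1/6 := by
          apply div_le_of_le_mul₀ hnR.le (by norm_num)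
          calc x i0 ≤ 1/6 := hi0
            _ ≤ 1/6 * n := by nlinarith
        linarith
      have := one_add_mul_le_pow ha n
      have hcan : (n:ℝ) * (x i0 / n) = x i0 := by field_simp
      calc (5:ℝ)/6 ≤ 1 - x i0 := by linarith
        _ = 1 + (n:ℝ) * (-(x i0 / n)) := by rw [mul_neg, hcan]; ring
        _ ≤ (1 + -(x i0 / n)) ^ n := one_add_mul_le_pow ha n
        _ = (1 - x i0 / n) ^ n := by ring_nf
    have hS1 : (1 - x i0 / n) ^ n ≤ 1 := by
      have hnn : 0 ≤ ∑ X ∈ Finset.univ.filter (fun X : Fin m → Fin n → Bool => ¬ ∀ j, X i0 j = false),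
          W X := Finset.sum_nonneg fun X _ => hWnn X
      rw [hS] at hsplitW; linarith
    rw [hq x, ← hsplitQ]
    linarith
  · -- case 2
    intro hxl
    set W : (Fin m → Fin n → Bool) → ℝ :=
      fun X => ∏ i, ∏ j, (if X i j then x i / n else 1 - x i / n) with hWdef
    set G : Prop → Prop := id with hG
    have hsplitW := Finset.sum_filter_add_sum_filter_not Finset.univ
      (fun X : Fin m → Fin n → Bool => ∀ i, ∃ j, X i j = true) W
    have hsplitQ := Finset.sum_filter_add_sum_filter_not Finset.univ
      (fun X : Fin m → Fin n → Bool => ∀ i, ∃ j, X i j = true) (fun X => W X * p X)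
    rw [htot] at hsplitW
    -- union bound on the bad part
    have hbad : ∑ X ∈ Finset.univ.filter (fun X : Fin m → Fin n → Bool => ¬ ∀ i, ∃ j, X i j = true),
        W X ≤ ∑ i0 : Fin m, (1 - x i0 / n) ^ n := by
      have step1 : ∀ X ∈ Finset.univ.filter (fun X : Fin m → Fin n → Bool => ¬ ∀ i, ∃ j, X i j = true),
          W X ≤ ∑ i0 : Fin m, (if (∀ j, X i0 j = false) then W X else 0) := by
        intro X hX
        rw [Finset.mem_filter] at hX
        obtain ⟨i0, hi0⟩ := not_forall.mp hX.2
        have hi0' : ∀ j, X i0 j = false :=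
          fun j => Bool.eq_false_iff.mpr (fun h => hi0 ⟨j, h⟩)
        have := Finset.single_le_sum (f := fun i : Fin m => if (∀ j, X i j = false) then W X else 0)
          (fun i _ => by by_cases h : ∀ j, X i j = false <;> simp [h, hWnn X] <;> exact hWnn X) (Finset.mem_univ i0)
        simpa [hi0'] using this
      calc ∑ X ∈ Finset.univ.filter (fun X : Fin m → Fin n → Bool => ¬ ∀ i, ∃ j, X i j = true), W X
          ≤ ∑ X ∈ Finset.univ.filter (fun X : Fin m → Fin n → Bool => ¬ ∀ i, ∃ j, X i j = true),
            ∑ i0 : Fin m, (if (∀ j, X i0 j = false) then W X else 0) := Finset.sum_le_sum step1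
        _ ≤ ∑ X : Fin m → Fin n → Bool, ∑ i0 : Fin m, (if (∀ j, X i0 j = false) then W X else 0) := by
            apply Finset.sum_le_sum_of_subset_of_nonneg (Finset.filter_subset _ _)
            intro X _ _
            apply Finset.sum_nonneg
            intro i _
            by_cases h : ∀ j, X i j = false <;> simp [h, hWnn X] <;> exact hWnn X
        _ = ∑ i0 : Fin m, ∑ X : Fin m → Fin n → Bool, (if (∀ j, X i0 j = false) then W X else 0) :=
            Finset.sum_comm
        _ = ∑ i0 : Fin m, (1 - x i0 / n) ^ n := by
            apply Finset.sum_congr rfl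
            intro i0 _
            rw [← Finset.sum_filter]
            exact hev i0
    -- each term small
    have hterm : ∀ i0 : Fin m, (1 - x i0 / n) ^ n ≤ ((m:ℝ)^2)⁻¹ := by
      intro i0
      have h2 := (hx i0).2
      have h0 : 0 ≤ 1 - x i0 / n := by
        rw [sub_nonneg, div_le_one hnR]; exact h2
      have hstep : (1 - x i0 / n) ^ n ≤ Real.exp (-(x i0 / n)) ^ n := by
        apply pow_le_pow_left₀ h0
        linarith [Real.add_one_le_exp (-(x i0 / n))]
      have hexp : Real.exp (-(x i0 / n)) ^ n = Real.exp (-(x i0)) := by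
        rw [← Real.exp_nat_mul]
        congr 1
        field_simp
      rw [hexp] at hstep
      have hle : Real.exp (-(x i0)) ≤ Real.exp (-(2 * Real.log m)) :=
        Real.exp_le_exp.mpr (neg_le_neg (hxl i0))
      have hval : Real.exp (-(2 * Real.log m)) = ((m:ℝ)^2)⁻¹ := by
        rw [Real.exp_neg]
        congr 1
        rw [show (2:ℝ) * Real.log m = ((2:ℕ):ℝ) * Real.log m by norm_num,
          Real.exp_nat_mul, Real.exp_log hmpos]
      linarith [hval ▸ hle]
    have hbad2 : ∑ X ∈ Finset.univ.filter (fun X : Fin m → Fin n → Bool => ¬ ∀ i, ∃ j, X i j = true),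
        W X ≤ 1/10 := by
      have : ∑ i0 : Fin m, (1 - x i0 / n) ^ n ≤ ∑ i0 : Fin m, ((m:ℝ)^2)⁻¹ :=
        Finset.sum_le_sum fun i0 _ => hterm i0
      have hcard : ∑ i0 : Fin m, ((m:ℝ)^2)⁻¹ = m * ((m:ℝ)^2)⁻¹ := by
        rw [Finset.sum_const, Finset.card_univ, Fintype.card_fin, nsmul_eq_mul]
      have : (m:ℝ) * ((m:ℝ)^2)⁻¹ = ((m:ℝ))⁻¹ := by
        field_simp
      have hminv : ((m:ℝ))⁻¹ ≤ 1/10 := by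
        rw [inv_le_comm₀ hmpos (by norm_num)]
        linarith
      calc ∑ X ∈ Finset.univ.filter (fun X : Fin m → Fin n → Bool => ¬ ∀ i, ∃ j, X i j = true), W X
          ≤ ∑ i0 : Fin m, (1 - x i0 / n) ^ n := hbad
        _ ≤ (m:ℝ) * ((m:ℝ)^2)⁻¹ := by rw [← hcard]; exact Finset.sum_le_sum fun i0 _ => hterm i0
        _ = ((m:ℝ))⁻¹ := this
        _ ≤ 1/10 := hminv
    -- assemble
    have hgood : ∑ X ∈ Finset.univ.filter (fun X : Fin m → Fin n → Bool => ∀ i, ∃ j, X i j = true),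
        W X * p X ≥ (2/3) * (9/10) := by
      have h1 : ∑ X ∈ Finset.univ.filter (fun X : Fin m → Fin n → Bool => ∀ i, ∃ j, X i j = true),
          W X * p X ≥ ∑ X ∈ Finset.univ.filter (fun X : Fin m → Fin n → Bool => ∀ i, ∃ j, X i j = true),
          W X * (2/3) := by
        apply Finset.sum_le_sum
        intro X hX
        rw [Finset.mem_filter] at hX
        exact mul_le_mul_of_nonneg_left (hp1 X hX.2) (hWnn X)
      have h2 : ∑ X ∈ Finset.univ.filter (fun X : Fin m → Fin n → Bool => ∀ i, ∃ j, X i j = true),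
          W X * (2/3) = (∑ X ∈ Finset.univ.filter (fun X : Fin m → Fin n → Bool => ∀ i, ∃ j, X i j = true),
          W X) * (2/3) := by rw [Finset.sum_mul]
      have h3 : ∑ X ∈ Finset.univ.filter (fun X : Fin m → Fin n → Bool => ∀ i, ∃ j, X i j = true),
          W X ≥ 9/10 := by linarith
      calc ∑ X ∈ Finset.univ.filter (fun X : Fin m → Fin n → Bool => ∀ i, ∃ j, X i j = true), W X * p X
          ≥ (∑ X ∈ Finset.univ.filter (fun X : Fin m → Fin n → Bool => ∀ i, ∃ j, X i j = true), W X) * (2/3) := by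
            rw [← h2]; exact h1
        _ ≥ (9/10) * (2/3) := by
            apply mul_le_mul_of_nonneg_right h3 (by norm_num)
        _ = (2/3) * (9/10) := by ring
    have hbadq : 0 ≤ ∑ X ∈ Finset.univ.filter (fun X : Fin m → Fin n → Bool => ¬ ∀ i, ∃ j, X i j = true),
        W X * p X :=
      Finset.sum_nonneg fun X _ => mul_nonneg (hWnn X) (hp01 X).1
    rw [hq x, ← hsplitQ]
    have : (2:ℝ)/3 * (9/10) = 3/5 := by norm_num
    linarith
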